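/- arXiv:math/0703364 — 2 statements merged into one kernel-verified Lean document; each statement's English description precedes it below -/
import Mathlib

section
/- Let (u_n)_{n≥1} be a locally uniformly bounded sequence of upper-semicontinuous functions on ℝ^N × [0,T], let u = limsup* u_n, and let (x_n,t_n) → (x,t) in ℝ^N × [0,T] be such that u_n(x_n,t_n) → u(x,t). Then for every z ∈ ℝ^{N−k}, limsup_{n→∞} 1_{K^{k,+}_{x_n,t_n,u_n}}(z) ≤ 1_{K^{k,+}_{x,t,u}}(z); equivalently, every z that belongs to K^{k,+}_{x_n,t_n,u_n} for infinitely many n belongs to K^{k,+}_{x,t,u}. -/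
/-!
If `z ∈ K^{k,+}_{xₙ,tₙ,uₙ}` for infinitely many `n`, then along those `n` we have
`uₙ(xₙ,tₙ) ≤ uₙ((π_k(xₙ),z),tₙ)`. The points `((π_k(xₙ),z),tₙ)` converge to `((π_k(x),z),t)`,
so the relaxed upper limit bounds the right-hand side asymptotically by `u((π_k(x),z),t)`,
while the left-hand side tends to `u(x,t)`. The indicator inequality is a reformulation.
-/

open MeasureTheory Filter

noncomputable section

/-- `ℝ^m` with the Euclidean structure. -/
abbrev Pt (m : ℕ) : Type := EuclideanSpace ℝ (Fin m)

/-- The point of `ℝ^N` whose first `k` coordinates are those of `x` and whose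
remaining `N - k` coordinates are those of `z` (the point `(π_k(x), z)`). -/
def slicePoint {N : ℕ} (k : ℕ) (x : Pt N) (z : Pt (N - k)) : Pt N :=
  WithLp.toLp 2 fun i : Fin N => if h : (i : ℕ) < k then x i else z ⟨(i : ℕ) - k, by have := i.isLt; omega⟩

/-- The projection `π_k` on the first `k` coordinates. -/
def projLow {N k : ℕ} (hk : k ≤ N) (x : Pt N) : Pt k :=
  WithLp.toLp 2 fun i : Fin k => x ⟨(i : ℕ), lt_of_lt_of_le i.isLt hk⟩

/-- The projection `π̃_k` on the last `N - k` coordinates. -/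
def projHigh {N : ℕ} (k : ℕ) (x : Pt N) : Pt (N - k) :=
  WithLp.toLp 2 fun i : Fin (N - k) => x ⟨k + (i : ℕ), by have := i.isLt; omega⟩

/-- The nonlocal slice superlevel set `K^{k,+}_{x,t,u}`. -/
def Kplus {N : ℕ} (k : ℕ) (u : Pt N → ℝ → ℝ) (x : Pt N) (t : ℝ) : Set (Pt (N - k)) :=
  {z | u x t ≤ u (slicePoint k x z) t}

/-- The nonlocal slice strict superlevel set `K^{k,-}_{x,t,u}`. -/
def Kminus {N : ℕ} (k : ℕ) (u : Pt N → ℝ → ℝ) (x : Pt N) (t : ℝ) : Set (Pt (N - k)) :=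
  {z | u x t < u (slicePoint k x z) t}

/-- The max-row-sum norm `|X|_∞ = max_i ∑_j |X_{ij}|`. -/
def matNormInf {N : ℕ} (X : Matrix (Fin N) (Fin N) ℝ) : ℝ :=
  ⨆ i : Fin N, ∑ j : Fin N, |X i j|

/-- The rank-one matrix `p ⊗ p`. -/
def outerProd {N : ℕ} (p : Pt N) : Matrix (Fin N) (Fin N) ℝ :=
  Matrix.of fun i j => p i * p j

/-- `𝓛^{N-k}(K)^{1/(N-k)}`. -/
def volPow {N : ℕ} (k : ℕ) (K : Set (Pt (N - k))) : ℝ :=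
  (volume K).toReal ^ ((1 : ℝ) / ((N - k : ℕ) : ℝ))

/-- The metric `d(A,B) = ∑_{n ≥ 1} 𝓛((A △ B) ∩ B(0,n)) / (2^n 𝓛(B(0,n)))` on
measurable subsets of `ℝ^m` (modulo null symmetric difference). -/
def setDist (m : ℕ) (A B : Set (Pt m)) : ℝ :=
  ∑' n : ℕ, (volume (symmDiff A B ∩ Metric.ball (0 : Pt m) ((n : ℝ) + 1))).toReal /
    ((2 : ℝ) ^ (n + 1) * (volume (Metric.ball (0 : Pt m) ((n : ℝ) + 1))).toReal)

/-- The type of nonlinearities `F(x,t,p,X,K)`. -/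
abbrev FType (N k : ℕ) : Type :=
  Pt N → ℝ → Pt N → Matrix (Fin N) (Fin N) ℝ → Set (Pt (N - k)) → ℝ

/-- `(y,s,q,Y,L)` is `δ`-close to `(x,t,p,X,K)` (with `s` in the time domain and
`q ≠ 0`, since `F` is only defined for nonzero gradients). -/
def ArgClose {N k : ℕ} (T δ : ℝ) (x : Pt N) (t : ℝ) (p : Pt N)
    (X : Matrix (Fin N) (Fin N) ℝ) (K : Set (Pt (N - k)))
    (y : Pt N) (s : ℝ) (q : Pt N) (Y : Matrix (Fin N) (Fin N) ℝ)
    (L : Set (Pt (N - k))) : Prop :=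
  ‖y - x‖ < δ ∧ |s - t| < δ ∧ s ∈ Set.Icc 0 T ∧ q ≠ 0 ∧ ‖q - p‖ < δ ∧
    matNormInf (Y - X) < δ ∧ setDist (N - k) L K < δ

/-- The lower semicontinuous envelope `F_*`. -/
def lowerEnv {N k : ℕ} (T : ℝ) (F : FType N k) (x : Pt N) (t : ℝ) (p : Pt N)
    (X : Matrix (Fin N) (Fin N) ℝ) (K : Set (Pt (N - k))) : EReal :=
  ⨆ (δ : ℝ) (_ : 0 < δ),
    ⨅ (y : Pt N) (s : ℝ) (q : Pt N) (Y : Matrix (Fin N) (Fin N) ℝ)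
      (L : Set (Pt (N - k))) (_ : ArgClose T δ x t p X K y s q Y L),
      ((F y s q Y L : ℝ) : EReal)

/-- The upper semicontinuous envelope `F^*`. -/
def upperEnv {N k : ℕ} (T : ℝ) (F : FType N k) (x : Pt N) (t : ℝ) (p : Pt N)
    (X : Matrix (Fin N) (Fin N) ℝ) (K : Set (Pt (N - k))) : EReal :=
  ⨅ (δ : ℝ) (_ : 0 < δ),
    ⨆ (y : Pt N) (s : ℝ) (q : Pt N) (Y : Matrix (Fin N) (Fin N) ℝ)
      (L : Set (Pt (N - k))) (_ : ArgClose T δ x t p X K y s q Y L),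
      ((F y s q Y L : ℝ) : EReal)

/-- A `C²` test function on `ℝ^N × [0,T]`. -/
def IsTest {N : ℕ} (φ : Pt N → ℝ → ℝ) : Prop :=
  ContDiff ℝ 2 (fun q : Pt N × ℝ => φ q.1 q.2)

/-- Spatial gradient. -/
def spaceGrad {N : ℕ} (f : Pt N → ℝ) (x : Pt N) : Pt N := gradient f x

/-- Spatial Hessian, as an `N × N` matrix. -/
def spaceHess {N : ℕ} (f : Pt N → ℝ) (x : Pt N) : Matrix (Fin N) (Fin N) ℝ :=
  Matrix.of fun i j =>
    fderiv ℝ (fun y => fderiv ℝ f y (EuclideanSpace.single j 1)) x (EuclideanSpace.single i 1)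

/-- Viscosity subsolution (in the sense of Slepčev) of
`∂u/∂t = F(x,t,Du,D²u,K^{k,+}_{x,t,u})` with initial datum `u₀`. -/
def IsSubsolution {N : ℕ} (k : ℕ) (T : ℝ) (F : FType N k) (u₀ : Pt N → ℝ)
    (u : Pt N → ℝ → ℝ) : Prop :=
  ∀ φ : Pt N → ℝ → ℝ, IsTest φ → ∀ x : Pt N, ∀ t ∈ Set.Icc (0 : ℝ) T,
    (∀ y : Pt N, ∀ s ∈ Set.Icc (0 : ℝ) T, u y s - φ y s ≤ u x t - φ x t) →
    (0 < t → ((deriv (φ x) t : ℝ) : EReal) ≤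
        lowerEnv T F x t (spaceGrad (fun y => φ y t) x)
          (spaceHess (fun y => φ y t) x) (Kplus k u x t)) ∧
    (t = 0 → u x 0 ≤ u₀ x)

/-- Viscosity supersolution of `∂u/∂t = F(x,t,Du,D²u,K^{k,+}_{x,t,u})`
(tested with the sets `K^{k,-}`). -/
def IsSupersolution {N : ℕ} (k : ℕ) (T : ℝ) (F : FType N k) (u₀ : Pt N → ℝ)
    (u : Pt N → ℝ → ℝ) : Prop :=
  ∀ φ : Pt N → ℝ → ℝ, IsTest φ → ∀ x : Pt N, ∀ t ∈ Set.Icc (0 : ℝ) T,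
    (∀ y : Pt N, ∀ s ∈ Set.Icc (0 : ℝ) T, u x t - φ x t ≤ u y s - φ y s) →
    (0 < t → upperEnv T F x t (spaceGrad (fun y => φ y t) x)
          (spaceHess (fun y => φ y t) x) (Kminus k u x t) ≤
        ((deriv (φ x) t : ℝ) : EReal)) ∧
    (t = 0 → u₀ x ≤ u x 0)

/-- A viscosity solution: continuous on the domain, subsolution and supersolution. -/
def IsSolution {N : ℕ} (k : ℕ) (T : ℝ) (F : FType N k) (u₀ : Pt N → ℝ)
    (u : Pt N → ℝ → ℝ) : Prop :=
  ContinuousOn (fun q : Pt N × ℝ => u q.1 q.2) (Set.univ ×ˢ Set.Icc 0 T) ∧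
  IsSubsolution k T F u₀ u ∧ IsSupersolution k T F u₀ u

/-- The class `𝒞`: `-1 < u ≤ 1` and `u(x,t) → -1` as `|x| → ∞`, uniformly in `t ∈ [0,T]`. -/
def InClassC {N : ℕ} (T : ℝ) (u : Pt N → ℝ → ℝ) : Prop :=
  (∀ x : Pt N, ∀ t ∈ Set.Icc (0 : ℝ) T, -1 < u x t ∧ u x t ≤ 1) ∧
  ∀ ε > (0 : ℝ), ∃ R : ℝ, ∀ x : Pt N, ∀ t ∈ Set.Icc (0 : ℝ) T, R < ‖x‖ → |u x t + 1| < ε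

/-- Boundedness on the parabolic domain. -/
def BoundedOn {N : ℕ} (T : ℝ) (u : Pt N → ℝ → ℝ) : Prop :=
  ∃ M : ℝ, ∀ x : Pt N, ∀ t ∈ Set.Icc (0 : ℝ) T, |u x t| ≤ M

/-- A modulus of continuity. -/
def IsModulus (w : ℝ → ℝ) : Prop :=
  Monotone w ∧ (∀ r, 0 ≤ w r) ∧ Tendsto w (nhdsWithin 0 (Set.Ioi 0)) (nhds 0)

/-- The block matrix inequality `(X 0; 0 -Y) ≤ (Z -Z; -Z Z)`. -/
def BlockLE {N : ℕ} (X Y Z : Matrix (Fin N) (Fin N) ℝ) : Prop :=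
  (Matrix.fromBlocks Z (-Z) (-Z) Z - Matrix.fromBlocks X 0 0 (-Y)).PosSemidef

/-- (H1): continuity of `F` (w.r.t. the metric `d` in the set variable). -/
def H1cont {N k : ℕ} (T : ℝ) (F : FType N k) : Prop :=
  ∀ (x : Pt N) (t : ℝ) (p : Pt N) (X : Matrix (Fin N) (Fin N) ℝ) (K : Set (Pt (N - k))),
    p ≠ 0 → t ∈ Set.Icc 0 T → ∀ ε > (0 : ℝ), ∃ δ > (0 : ℝ),
      ∀ y s q Y L, ArgClose T δ x t p X K y s q Y L →
        |F y s q Y L - F x t p X K| < ε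

/-- (H2): at `p = 0, X = 0` the two envelopes coincide, are finite, and do not
depend on the set argument. -/
def H2 {N k : ℕ} (T : ℝ) (F : FType N k) : Prop :=
  ∀ (x : Pt N) (t : ℝ) (K L : Set (Pt (N - k))), t ∈ Set.Icc 0 T →
    lowerEnv T F x t 0 0 K = upperEnv T F x t 0 0 L ∧
    ⊥ < lowerEnv T F x t 0 0 K ∧ lowerEnv T F x t 0 0 K < ⊤

/-- (H3): monotonicity of `F` in the set argument. -/
def H3mono {N k : ℕ} (T : ℝ) (F : FType N k) : Prop :=
  ∀ (x : Pt N) (t : ℝ) (p : Pt N) (X : Matrix (Fin N) (Fin N) ℝ)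
    (K L : Set (Pt (N - k))), t ∈ Set.Icc 0 T → p ≠ 0 → K ⊆ L →
      F x t p X K ≤ F x t p X L

/-- (H4): `F` is geometric. -/
def H4geom {N k : ℕ} (T : ℝ) (F : FType N k) : Prop :=
  ∀ (x : Pt N) (t : ℝ) (p : Pt N) (X : Matrix (Fin N) (Fin N) ℝ)
    (K : Set (Pt (N - k))), t ∈ Set.Icc 0 T → p ≠ 0 →
    ∀ lam : ℝ, 0 < lam → ∀ mu : ℝ,
      F x t (lam • p) (lam • X + mu • outerProd p) K = lam * F x t p X K

/-- (H5-θ): growth bound, with `θ = 1` allowing the nonlocal volume term. -/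
def H5 {N k : ℕ} (T θ : ℝ) (F : FType N k) (L₁ L₂ : ℝ) : Prop :=
  ∀ (x : Pt N) (t : ℝ) (p : Pt N) (X : Matrix (Fin N) (Fin N) ℝ)
    (K : Set (Pt (N - k))), t ∈ Set.Icc 0 T → p ≠ 0 →
      |F x t p X K| ≤
        L₁ * ((1 + ‖x‖) * ‖p‖ + θ * volPow k K * ‖projHigh k p‖) +
          L₂ * (1 + ‖x‖ ^ 2) * matNormInf X

/-- (H6-θ): the structure condition with modulus `w` and constant `σ`. -/
def H6 {N k : ℕ} (T θ : ℝ) (F : FType N k) (w : ℝ → ℝ) (σ : ℝ) : Prop :=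
  ∀ (x y : Pt N) (t : ℝ) (p : Pt N) (X Y Z : Matrix (Fin N) (Fin N) ℝ)
    (K : Set (Pt (N - k))), t ∈ Set.Icc 0 T → p ≠ 0 →
    X.IsSymm → Y.IsSymm → Z.IsSymm → BlockLE X Y Z →
      F x t p X K - F y t p Y K ≤
        w (‖x - y‖ * (1 + ‖p‖ + θ * volPow k K * ‖projHigh k p‖) + σ * ‖x - y‖ ^ 2)

/-- (H7): when `π̃_k(p) = 0`, `F` reduces to a continuous local nonlinearity `G`
satisfying (H6-0). -/
def H7 {N k : ℕ} (T : ℝ) (hk : k ≤ N) (F : FType N k) : Prop :=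
  ∃ G : Pt N → ℝ → Pt k → Matrix (Fin N) (Fin N) ℝ → ℝ,
    ContinuousOn (fun q : (Pt N × ℝ) × Pt k × Matrix (Fin N) (Fin N) ℝ =>
      G q.1.1 q.1.2 q.2.1 q.2.2) {q | q.2.1 ≠ 0} ∧
    (∃ w σ, IsModulus w ∧ 0 < σ ∧
      ∀ (x y : Pt N) (t : ℝ) (p : Pt k) (X Y Z : Matrix (Fin N) (Fin N) ℝ),
        t ∈ Set.Icc 0 T → p ≠ 0 → X.IsSymm → Y.IsSymm → Z.IsSymm → BlockLE X Y Z →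
          G x t p X - G y t p Y ≤ w (‖x - y‖ * (1 + ‖p‖) + σ * ‖x - y‖ ^ 2)) ∧
    ∀ (x : Pt N) (t : ℝ) (p : Pt N) (X : Matrix (Fin N) (Fin N) ℝ)
      (K : Set (Pt (N - k))), t ∈ Set.Icc 0 T → p ≠ 0 → projHigh k p = 0 →
        F x t p X K = G x t (projLow hk p) X
/-- (H0'): bounded, uniformly continuous initial datum. -/
def H0' {N : ℕ} (u₀ : Pt N → ℝ) : Prop :=
  UniformContinuous u₀ ∧ ∃ M : ℝ, ∀ x : Pt N, |u₀ x| ≤ M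

/-- (H1'): both envelopes of `F` tend to `0` as `|p|, |X| → 0`, uniformly in `(x,t,K)`. -/
def H1' {N k : ℕ} (T : ℝ) (F : FType N k) : Prop :=
  ∀ ε > (0 : ℝ), ∃ δ > (0 : ℝ),
    ∀ (x : Pt N) (t : ℝ) (p : Pt N) (X : Matrix (Fin N) (Fin N) ℝ)
      (K : Set (Pt (N - k))), t ∈ Set.Icc 0 T → ‖p‖ < δ → matNormInf X < δ →
      ((-ε : ℝ) : EReal) < lowerEnv T F x t p X K ∧
      lowerEnv T F x t p X K < ((ε : ℝ) : EReal) ∧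
      ((-ε : ℝ) : EReal) < upperEnv T F x t p X K ∧
      upperEnv T F x t p X K < ((ε : ℝ) : EReal)

/-- (H2'): local modulus of continuity in `(p,X)`, with `(1+|x|)` weight. -/
def H2' {N k : ℕ} (T : ℝ) (F : FType N k) : Prop :=
  ∀ R > (0 : ℝ), ∃ w : ℝ → ℝ, IsModulus w ∧
    ∀ (x : Pt N) (t : ℝ) (p q : Pt N) (X Y : Matrix (Fin N) (Fin N) ℝ)
      (K : Set (Pt (N - k))), t ∈ Set.Icc 0 T → p ≠ 0 → q ≠ 0 →
      ‖p‖ + matNormInf X ≤ R → ‖q‖ + matNormInf Y ≤ R →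
      F x t p X K - F x t q Y K ≤ w ((matNormInf (X - Y) + ‖p - q‖) * (1 + ‖x‖))

/-- (H3'): insensitivity of `F` to modifications of the set argument far away. -/
def H3' {N k : ℕ} (T : ℝ) (F : FType N k) : Prop :=
  ∀ R > (0 : ℝ), ∀ ε > (0 : ℝ), ∃ r > (0 : ℝ),
    ∀ (x : Pt N) (t : ℝ) (p : Pt N) (X : Matrix (Fin N) (Fin N) ℝ)
      (K L : Set (Pt (N - k))), t ∈ Set.Icc 0 T → p ≠ 0 →
      ‖p‖ + matNormInf X ≤ R → (K \ L ⊆ {z : Pt (N - k) | r ≤ ‖z‖}) →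
      |F x t p X K - F x t p X L| < ε

/-- (H4'): insensitivity of `F` to the set argument when `|π̃_k(p)|` is small. -/
def H4' {N k : ℕ} (T : ℝ) (F : FType N k) : Prop :=
  ∀ R > (0 : ℝ), ∀ ε > (0 : ℝ), ∃ lam > (0 : ℝ),
    ∀ (x : Pt N) (t : ℝ) (p : Pt N) (X : Matrix (Fin N) (Fin N) ℝ)
      (K L : Set (Pt (N - k))), t ∈ Set.Icc 0 T → p ≠ 0 →
      ‖p‖ + matNormInf X ≤ R → ‖projHigh k p‖ ≤ lam →
      |F x t p X K - F x t p X L| < ε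
/-- The relaxed upper semilimit `limsup* uₙ` (as the least eventual local upper bound). -/
def relaxSup {N : ℕ} (T : ℝ) (us : ℕ → Pt N → ℝ → ℝ) (x : Pt N) (t : ℝ) : ℝ :=
  sInf {r : ℝ | ∃ δ > (0 : ℝ), ∃ m : ℕ, ∀ n ≥ m, ∀ (y : Pt N) (s : ℝ),
    ‖y - x‖ < δ → |s - t| < δ → s ∈ Set.Icc 0 T → us n y s ≤ r}

/-- The relaxed lower semilimit `liminf_* uₙ`. -/
def relaxInf {N : ℕ} (T : ℝ) (us : ℕ → Pt N → ℝ → ℝ) (x : Pt N) (t : ℝ) : ℝ :=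
  sSup {r : ℝ | ∃ δ > (0 : ℝ), ∃ m : ℕ, ∀ n ≥ m, ∀ (y : Pt N) (s : ℝ),
    ‖y - x‖ < δ → |s - t| < δ → s ∈ Set.Icc 0 T → r ≤ us n y s}

/-- `liminf_* Fₙ`: the relaxed lower limit of a sequence of nonlinearities. -/
def limInfF {N k : ℕ} (T : ℝ) (Fs : ℕ → FType N k) (x : Pt N) (t : ℝ) (p : Pt N)
    (X : Matrix (Fin N) (Fin N) ℝ) (K : Set (Pt (N - k))) : EReal :=
  ⨆ (δ : ℝ) (_ : 0 < δ) (m : ℕ),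
    ⨅ (n : ℕ) (_ : m ≤ n) (y : Pt N) (s : ℝ) (q : Pt N)
      (Y : Matrix (Fin N) (Fin N) ℝ) (L : Set (Pt (N - k)))
      (_ : ArgClose T δ x t p X K y s q Y L),
      ((Fs n y s q Y L : ℝ) : EReal)

/-- `limsup* Fₙ`: the relaxed upper limit of a sequence of nonlinearities. -/
def limSupF {N k : ℕ} (T : ℝ) (Fs : ℕ → FType N k) (x : Pt N) (t : ℝ) (p : Pt N)
    (X : Matrix (Fin N) (Fin N) ℝ) (K : Set (Pt (N - k))) : EReal :=
  ⨅ (δ : ℝ) (_ : 0 < δ) (m : ℕ),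
    ⨆ (n : ℕ) (_ : m ≤ n) (y : Pt N) (s : ℝ) (q : Pt N)
      (Y : Matrix (Fin N) (Fin N) ℝ) (L : Set (Pt (N - k)))
      (_ : ArgClose T δ x t p X K y s q Y L),
      ((Fs n y s q Y L : ℝ) : EReal)

/-- Viscosity subsolution of `∂u/∂t + H(x,t,Du,D²u,K^{k,+}_{x,t,u}) = 0` (for `t > 0`),
where `H` is an extended-real-valued Hamiltonian. -/
def IsSubsolutionE {N : ℕ} (k : ℕ) (T : ℝ)
    (H : Pt N → ℝ → Pt N → Matrix (Fin N) (Fin N) ℝ → Set (Pt (N - k)) → EReal)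
    (u : Pt N → ℝ → ℝ) : Prop :=
  ∀ φ : Pt N → ℝ → ℝ, IsTest φ → ∀ x : Pt N, ∀ t ∈ Set.Icc (0 : ℝ) T, 0 < t →
    (∀ y : Pt N, ∀ s ∈ Set.Icc (0 : ℝ) T, u y s - φ y s ≤ u x t - φ x t) →
    ((deriv (φ x) t : ℝ) : EReal) +
      H x t (spaceGrad (fun y => φ y t) x) (spaceHess (fun y => φ y t) x)
        (Kplus k u x t) ≤ 0

/-- Viscosity supersolution of `∂u/∂t + H(x,t,Du,D²u,K^{k,-}_{x,t,u}) = 0` (for `t > 0`). -/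
def IsSupersolutionE {N : ℕ} (k : ℕ) (T : ℝ)
    (H : Pt N → ℝ → Pt N → Matrix (Fin N) (Fin N) ℝ → Set (Pt (N - k)) → EReal)
    (u : Pt N → ℝ → ℝ) : Prop :=
  ∀ φ : Pt N → ℝ → ℝ, IsTest φ → ∀ x : Pt N, ∀ t ∈ Set.Icc (0 : ℝ) T, 0 < t →
    (∀ y : Pt N, ∀ s ∈ Set.Icc (0 : ℝ) T, u x t - φ x t ≤ u y s - φ y s) →
    0 ≤ ((deriv (φ x) t : ℝ) : EReal) +
      H x t (spaceGrad (fun y => φ y t) x) (spaceHess (fun y => φ y t) x)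
        (Kminus k u x t)

theorem limsup_indicator_one_le_of_frequently {ι α : Type*} {l : Filter ι} [l.NeBot]
    {s : ι → Set α} {S : Set α} {z : α} (h : (∃ᶠ n in l, z ∈ s n) → z ∈ S) :
    limsup (fun n => (s n).indicator (fun _ => (1 : ℝ)) z) l ≤
      S.indicator (fun _ => (1 : ℝ)) z := by
  have hcobdd : IsCoboundedUnder (· ≤ ·) l (fun n => (s n).indicator (fun _ => (1 : ℝ)) z) :=
    isCoboundedUnder_le_of_le l fun n => Set.indicator_nonneg (fun _ _ => zero_le_one) z
  by_cases hz : z ∈ S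
  · rw [Set.indicator_of_mem hz]
    exact limsup_le_of_le hcobdd
      (Eventually.of_forall fun n => Set.indicator_le_self' (fun _ _ => zero_le_one) z)
  · rw [Set.indicator_of_notMem hz]
    refine limsup_le_of_le hcobdd ?_
    filter_upwards [not_frequently.mp (mt h hz)] with n hn
    rw [Set.indicator_of_notMem hn]

theorem continuous_slicePoint_left {N : ℕ} (k : ℕ) (z : Pt (N - k)) :
    Continuous fun x : Pt N => slicePoint k x z := by
  refine (PiLp.continuous_toLp 2 _).comp (continuous_pi fun i => ?_)
  by_cases h : (i : ℕ) < k
  · simp only [h, dif_pos]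
    exact (continuous_apply i).comp (PiLp.continuous_ofLp 2 _)
  · simp only [h, dif_neg, not_false_iff]
    exact continuous_const

def LocallyUniformlyBddAbove {N : ℕ} (T : ℝ) (us : ℕ → Pt N → ℝ → ℝ) : Prop :=
  ∀ R > (0 : ℝ), ∃ M : ℝ, ∀ (n : ℕ) (y : Pt N) (s : ℝ),
    ‖y‖ ≤ R → s ∈ Set.Icc 0 T → us n y s ≤ M

section RelaxSup

variable {N : ℕ} {T : ℝ} {us : ℕ → Pt N → ℝ → ℝ}

theorem exists_eventual_local_upper_bound
    (hbdd : LocallyUniformlyBddAbove T us) (x : Pt N) (t : ℝ) :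
    ∃ r : ℝ, ∃ δ > (0 : ℝ), ∃ m : ℕ, ∀ n ≥ m, ∀ (y : Pt N) (s : ℝ),
      ‖y - x‖ < δ → |s - t| < δ → s ∈ Set.Icc 0 T → us n y s ≤ r := by
  obtain ⟨M, hM⟩ := hbdd (‖x‖ + 1) (by positivity)
  refine ⟨M, 1, one_pos, 0, fun n _ y s hy _ hs => hM n y s ?_ hs⟩
  linarith [norm_sub_norm_le y x]

theorem le_relaxSup_of_frequently_le
    (hbdd : LocallyUniformlyBddAbove T us)
    {ys : ℕ → Pt N} {ts : ℕ → ℝ} {x : Pt N} {t : ℝ} (hts : ∀ n, ts n ∈ Set.Icc (0 : ℝ) T)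
    (hyconv : Tendsto ys atTop (nhds x)) (htconv : Tendsto ts atTop (nhds t))
    {v : ℕ → ℝ} {L : ℝ} (hv : Tendsto v atTop (nhds L))
    (hfreq : ∃ᶠ n in atTop, v n ≤ us n (ys n) (ts n)) :
    L ≤ relaxSup T us x t := by
  obtain ⟨r₀, hr₀⟩ := exists_eventual_local_upper_bound hbdd x t
  refine le_csInf ⟨r₀, hr₀⟩ ?_
  rintro r ⟨δ, hδ, m, hr⟩
  by_contra! hrL
  have hynear : ∀ᶠ n in atTop, ‖ys n - x‖ < δ := by
    simpa only [dist_eq_norm] using Metric.tendsto_nhds.mp hyconv δ hδ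
  have htnear : ∀ᶠ n in atTop, |ts n - t| < δ := by
    simpa only [Real.dist_eq] using Metric.tendsto_nhds.mp htconv δ hδ
  have hbelow : ∀ᶠ n in atTop, us n (ys n) (ts n) ≤ r := by
    filter_upwards [eventually_ge_atTop m, hynear, htnear] with n hm hy ht
    exact hr n hm (ys n) (ts n) hy ht (hts n)
  have habove : ∀ᶠ n in atTop, r < v n := hv.eventually (eventually_gt_nhds hrL)
  obtain ⟨n, hvn, hn_below, hn_above⟩ := (hfreq.and_eventually (hbelow.and habove)).exists
  linarith

end RelaxSup

theorem kplus_upper_semilimit_general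
    {N k : ℕ} {T : ℝ}
    (us : ℕ → Pt N → ℝ → ℝ)
    (hubdd : ∀ R > (0 : ℝ), ∃ M : ℝ, ∀ (n : ℕ) (x : Pt N) (t : ℝ),
      ‖x‖ ≤ R → t ∈ Set.Icc 0 T → |us n x t| ≤ M)
    (u : Pt N → ℝ → ℝ) (hu : u = relaxSup T us)
    (xs : ℕ → Pt N) (ts : ℕ → ℝ) (x : Pt N) (t : ℝ)
    (hts : ∀ n, ts n ∈ Set.Icc (0 : ℝ) T)
    (hxconv : Tendsto xs atTop (nhds x)) (htconv : Tendsto ts atTop (nhds t))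
    (huconv : Tendsto (fun n => us n (xs n) (ts n)) atTop (nhds (u x t))) :
    (∀ z : Pt (N - k),
      Filter.limsup (fun n => (Kplus k (us n) (xs n) (ts n)).indicator
        (fun _ => (1 : ℝ)) z) atTop ≤
        (Kplus k u x t).indicator (fun _ => (1 : ℝ)) z) ∧
    (∀ z : Pt (N - k),
      (∃ᶠ n in atTop, z ∈ Kplus k (us n) (xs n) (ts n)) → z ∈ Kplus k u x t) := by
  have hbdd : LocallyUniformlyBddAbove T us := fun R hR =>
    (hubdd R hR).imp fun M hM n y s hy hs => (le_abs_self _).trans (hM n y s hy hs)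
  subst hu
  have hmem : ∀ z : Pt (N - k),
      (∃ᶠ n in atTop, z ∈ Kplus k (us n) (xs n) (ts n)) → z ∈ Kplus k (relaxSup T us) x t :=
    fun z hfreq => le_relaxSup_of_frequently_le hbdd hts
      ((continuous_slicePoint_left k z).continuousAt.tendsto.comp hxconv) htconv huconv hfreq
  exact ⟨fun z => limsup_indicator_one_le_of_frequently (hmem z), hmem⟩

/-- **Lemma 5.4**: along a sequence `(xₙ,tₙ) → (x,t)` with `uₙ(xₙ,tₙ) → u(x,t)`
where `u = limsup* uₙ`, the indicator functions of the slice superlevel sets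
satisfy `limsup 1_{K^{k,+}_{xₙ,tₙ,uₙ}} ≤ 1_{K^{k,+}_{x,t,u}}`; equivalently, any
point belonging to `K^{k,+}_{xₙ,tₙ,uₙ}` for infinitely many `n` belongs to
`K^{k,+}_{x,t,u}`. -/
theorem kplus_upper_semilimit
    {N k : ℕ} (hN : 1 ≤ N) (hk1 : 1 ≤ k) (hkN : k ≤ N) {T : ℝ} (hT : 0 < T)
    (us : ℕ → Pt N → ℝ → ℝ)
    (hubdd : ∀ R > (0 : ℝ), ∃ M : ℝ, ∀ (n : ℕ) (x : Pt N) (t : ℝ),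
      ‖x‖ ≤ R → t ∈ Set.Icc 0 T → |us n x t| ≤ M)
    (husc : ∀ n, UpperSemicontinuousOn (fun q : Pt N × ℝ => us n q.1 q.2)
      (Set.univ ×ˢ Set.Icc 0 T))
    (u : Pt N → ℝ → ℝ) (hu : u = relaxSup T us)
    (xs : ℕ → Pt N) (ts : ℕ → ℝ) (x : Pt N) (t : ℝ)
    (ht : t ∈ Set.Icc (0 : ℝ) T) (hts : ∀ n, ts n ∈ Set.Icc (0 : ℝ) T)
    (hxconv : Tendsto xs atTop (nhds x)) (htconv : Tendsto ts atTop (nhds t))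
    (huconv : Tendsto (fun n => us n (xs n) (ts n)) atTop (nhds (u x t))) :
    (∀ z : Pt (N - k),
      Filter.limsup (fun n => (Kplus k (us n) (xs n) (ts n)).indicator
        (fun _ => (1 : ℝ)) z) atTop ≤
        (Kplus k u x t).indicator (fun _ => (1 : ℝ)) z) ∧
    (∀ z : Pt (N - k),
      (∃ᶠ n in atTop, z ∈ Kplus k (us n) (xs n) (ts n)) → z ∈ Kplus k u x t) :=
  kplus_upper_semilimit_general us hubdd u hu xs ts x t hts hxconv htconv huconv
end
end

section
/- Let u, v : ℝ^N × [0,T] → ℝ, ε, η > 0, and let (x̄,ȳ,t̄) be a maximum point of Φ(x,y,t) = u(x,t) − v(y,t) − Σ_{i=1}^N |x_i − y_i|⁴/(4ε⁴) − ηt over ℝ^N × ℝ^N × [0,T]. Then K^{k,+}_{x̄,t̄,u} ⊂ K^{k,+}_{ȳ,t̄,v}; and if moreover x̄_{i_0} ≠ ȳ_{i_0} for some index i_0 with k < i_0 ≤ N, then the stronger inclusion K^{k,+}_{x̄,t̄,u} ⊂ K^{k,−}_{ȳ,t̄,v} holds. -/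
open MeasureTheory Filter

noncomputable section

/-!
Sliding `x̄` and `ȳ` to the same last `N - k` coordinates `z` keeps the first `k`
coordinate differences and kills the penalty in the others, so maximality of `Φ` at
`(x̄, ȳ, t̄)` gives
`v(ȳ) + ∑_{i > k} |x̄ᵢ - ȳᵢ|⁴/(4ε⁴) ≤ v(π_k ȳ, z) + u(x̄) - u(π_k x̄, z)`.
For `z ∈ K^{k,+}_{x̄,t̄,u}` the last difference is `≤ 0`, while the penalty sum is
nonnegative, and positive as soon as `x̄ᵢ ≠ ȳᵢ` for some `i > k`.
-/

section SlicePoint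

variable {N k : ℕ}

theorem slicePoint_sub_slicePoint_apply (x y : Pt N) (z : Pt (N - k)) (i : Fin N) :
    slicePoint k x z i - slicePoint k y z i = if (i : ℕ) < k then x i - y i else 0 := by
  by_cases h : (i : ℕ) < k <;> simp [slicePoint, h]

theorem sum_slicePoint_sub_slicePoint {ψ : ℝ → ℝ} (hψ : ψ 0 = 0)
    (x y : Pt N) (z : Pt (N - k)) :
    ∑ i, ψ (slicePoint k x z i - slicePoint k y z i) =
      ∑ i : Fin N with i.val < k, ψ (x i - y i) := by
  rw [Finset.sum_filter]
  refine Finset.sum_congr rfl fun i _ => ?_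
  rw [slicePoint_sub_slicePoint_apply]
  split_ifs <;> simp [hψ]

def penalizedDiff (u v : Pt N → ℝ → ℝ) (ψ : ℝ → ℝ) (x y : Pt N) (t : ℝ) : ℝ :=
  u x t - v y t - ∑ i, ψ (x i - y i)

variable {u v : Pt N → ℝ → ℝ} {ψ : ℝ → ℝ} {x y : Pt N} {t : ℝ}

theorem add_sum_high_le_of_mem_Kplus (hψ : ψ 0 = 0) {z : Pt (N - k)}
    (hmax : penalizedDiff u v ψ (slicePoint k x z) (slicePoint k y z) t ≤
      penalizedDiff u v ψ x y t)
    (hz : z ∈ Kplus k u x t) :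
    v y t + ∑ i : Fin N with k ≤ i.val, ψ (x i - y i) ≤ v (slicePoint k y z) t := by
  rw [penalizedDiff, penalizedDiff, sum_slicePoint_sub_slicePoint hψ,
    ← Finset.sum_filter_add_sum_filter_not Finset.univ (fun i : Fin N => i.val < k)] at hmax
  simp only [not_lt] at hmax
  have hu : u x t ≤ u (slicePoint k x z) t := hz
  linarith

theorem Kplus_subset_Kplus_of_slice_max (hψ : ψ 0 = 0) (hψ_nonneg : ∀ r, 0 ≤ ψ r)
    (hmax : ∀ z : Pt (N - k), penalizedDiff u v ψ (slicePoint k x z) (slicePoint k y z) t ≤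
      penalizedDiff u v ψ x y t) :
    Kplus k u x t ⊆ Kplus k v y t := fun z hz => by
  have hsum : 0 ≤ ∑ i : Fin N with k ≤ i.val, ψ (x i - y i) :=
    Finset.sum_nonneg fun i _ => hψ_nonneg _
  have := add_sum_high_le_of_mem_Kplus hψ (hmax z) hz
  show v y t ≤ v (slicePoint k y z) t
  linarith

theorem Kplus_subset_Kminus_of_slice_max (hψ : ψ 0 = 0) (hψ_nonneg : ∀ r, 0 ≤ ψ r)
    (hmax : ∀ z : Pt (N - k), penalizedDiff u v ψ (slicePoint k x z) (slicePoint k y z) t ≤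
      penalizedDiff u v ψ x y t)
    {i₀ : Fin N} (hi₀ : k ≤ i₀.val) (hψi₀ : 0 < ψ (x i₀ - y i₀)) :
    Kplus k u x t ⊆ Kminus k v y t := fun z hz => by
  have hsum : ψ (x i₀ - y i₀) ≤ ∑ i : Fin N with k ≤ i.val, ψ (x i - y i) :=
    Finset.single_le_sum (f := fun i => ψ (x i - y i)) (fun i _ => hψ_nonneg _)
      (Finset.mem_filter.2 ⟨Finset.mem_univ i₀, hi₀⟩)
  have := add_sum_high_le_of_mem_Kplus hψ (hmax z) hz
  show v y t < v (slicePoint k y z) t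
  linarith

end SlicePoint

theorem maxpoint_nonlocal_inclusion_general
    {N k : ℕ} {T : ℝ}
    (u v : Pt N → ℝ → ℝ) (ε η : ℝ) (hε : 0 < ε)
    (Φ : Pt N → Pt N → ℝ → ℝ)
    (hΦ : Φ = fun x y t =>
      u x t - v y t - (∑ i : Fin N, |x i - y i| ^ 4 / (4 * ε ^ 4)) - η * t)
    (x' y' : Pt N) (t' : ℝ) (ht' : t' ∈ Set.Icc (0 : ℝ) T)
    (hmax : ∀ x y : Pt N, ∀ t ∈ Set.Icc (0 : ℝ) T, Φ x y t ≤ Φ x' y' t') :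
    Kplus k u x' t' ⊆ Kplus k v y' t' ∧
    ((∃ i : Fin N, k ≤ (i : ℕ) ∧ x' i ≠ y' i) →
      Kplus k u x' t' ⊆ Kminus k v y' t') := by
  set ψ : ℝ → ℝ := fun r => |r| ^ 4 / (4 * ε ^ 4)
  have hψ : ψ 0 = 0 := by simp [ψ]
  have hψ_nonneg : ∀ r, 0 ≤ ψ r := fun r => by positivity
  have hslice : ∀ z : Pt (N - k),
      penalizedDiff u v ψ (slicePoint k x' z) (slicePoint k y' z) t' ≤
        penalizedDiff u v ψ x' y' t' := fun z => by
    have := hmax (slicePoint k x' z) (slicePoint k y' z) t' ht'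
    simp only [hΦ] at this
    simp only [penalizedDiff]
    linarith
  refine ⟨Kplus_subset_Kplus_of_slice_max hψ hψ_nonneg hslice, ?_⟩
  rintro ⟨i₀, hi₀, hxy⟩
  have hψi₀ : 0 < ψ (x' i₀ - y' i₀) := by
    have : x' i₀ - y' i₀ ≠ 0 := sub_ne_zero.2 hxy
    positivity
  exact Kplus_subset_Kminus_of_slice_max hψ hψ_nonneg hslice hi₀ hψi₀

/-- **Inclusion of nonlocal terms at a maximum point** (Steps 3–4 of the proof of
Theorem 3.1): if `(x̄,ȳ,t̄)` maximizes
`Φ(x,y,t) = u(x,t) - v(y,t) - ∑ᵢ|xᵢ-yᵢ|⁴/(4ε⁴) - ηt`, then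
`K^{k,+}_{x̄,t̄,u} ⊆ K^{k,+}_{ȳ,t̄,v}`, and if `x̄` and `ȳ` differ in one of the
last `N-k` coordinates, then `K^{k,+}_{x̄,t̄,u} ⊆ K^{k,-}_{ȳ,t̄,v}`. -/
theorem maxpoint_nonlocal_inclusion
    {N k : ℕ} (hN : 1 ≤ N) (hk1 : 1 ≤ k) (hkN : k ≤ N) {T : ℝ} (hT : 0 < T)
    (u v : Pt N → ℝ → ℝ) (ε η : ℝ) (hε : 0 < ε) (hη : 0 < η)
    (Φ : Pt N → Pt N → ℝ → ℝ)
    (hΦ : Φ = fun x y t =>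
      u x t - v y t - (∑ i : Fin N, |x i - y i| ^ 4 / (4 * ε ^ 4)) - η * t)
    (x' y' : Pt N) (t' : ℝ) (ht' : t' ∈ Set.Icc (0 : ℝ) T)
    (hmax : ∀ x y : Pt N, ∀ t ∈ Set.Icc (0 : ℝ) T, Φ x y t ≤ Φ x' y' t') :
    Kplus k u x' t' ⊆ Kplus k v y' t' ∧
    ((∃ i : Fin N, k ≤ (i : ℕ) ∧ x' i ≠ y' i) →
      Kplus k u x' t' ⊆ Kminus k v y' t') :=
  maxpoint_nonlocal_inclusion_general u v ε η hε Φ hΦ x' y' t' ht' hmax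
end
end
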